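/- Let G be a complete graph whose edges are red-blue colored with no blue copy of the fan F_3, let H be a set of 5 vertices inducing a blue complete graph K_5, and let u be a vertex of H. If u has at least 2 blue neighbors outside H, then the blue neighbors of u outside H pairwise induce only red edges (i.e., they form a red clique). -/

import Mathlib

/-! If `x, y` were joined by a blue edge, then `u` would be the center of a blue `F₃`
whose three matching edges are `xy` and two disjoint edges of the blue `K₄` on `H \ {u}`. -/

/-- The fan `F n = K₁ + n·K₂`: vertex 0 is the center, and vertices
`2k+1, 2k+2` form the `k`-th edge of the matching, for `k < n`. -/
def fanGraph (n : ℕ) : SimpleGraph (Fin (2 * n + 1)) where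
  Adj v w := v ≠ w ∧ (v = 0 ∨ w = 0 ∨ (v.val - 1) / 2 = (w.val - 1) / 2)
  symm := by
    refine ⟨?_⟩
    intro v w h
    obtain ⟨h1, h2⟩ := h
    refine ⟨h1.symm, ?_⟩
    tauto
  loopless := by refine ⟨?_⟩; intro v h; exact h.1 rfl

/-- `ContainsCopy G H` : `G` contains a subgraph isomorphic to `H`
(an injective map of vertices sending edges of `H` to edges of `G`). -/
def ContainsCopy {α β : Type*} (G : SimpleGraph α) (H : SimpleGraph β) : Prop :=
  ∃ f : β ↪ α, ∀ ⦃a b : β⦄, H.Adj a b → G.Adj (f a) (f b)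

open Finset

lemma containsCopy_fanGraph_three {V : Type*} {B : SimpleGraph V} {u x y a b c d : V}
    (hux : B.Adj u x) (huy : B.Adj u y) (hua : B.Adj u a) (hub : B.Adj u b)
    (huc : B.Adj u c) (hud : B.Adj u d) (hxy : B.Adj x y) (hab : B.Adj a b) (hcd : B.Adj c d)
    (hxa : x ≠ a) (hxb : x ≠ b) (hxc : x ≠ c) (hxd : x ≠ d)
    (hya : y ≠ a) (hyb : y ≠ b) (hyc : y ≠ c) (hyd : y ≠ d)
    (hac : a ≠ c) (had : a ≠ d) (hbc : b ≠ c) (hbd : b ≠ d) :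
    ContainsCopy B (fanGraph 3) := by
  have hinj : Function.Injective ![u, x, y, a, b, c, d] := by
    simp only [Matrix.vecCons, Fin.cons_injective_iff, Set.mem_range, Fin.exists_fin_succ,
      Fin.cons_zero, Fin.cons_succ, Fin.exists_fin_zero, not_or, not_false_eq_true, and_true,
      Function.injective_of_subsingleton]
    exact ⟨⟨hux.ne', huy.ne', hua.ne', hub.ne', huc.ne', hud.ne'⟩,
      ⟨hxy.ne', hxa.symm, hxb.symm, hxc.symm, hxd.symm⟩, ⟨hya.symm, hyb.symm, hyc.symm, hyd.symm⟩,
      ⟨hab.ne', hac.symm, had.symm⟩, ⟨hbc.symm, hbd.symm⟩, hcd.ne'⟩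
  refine ⟨⟨_, hinj⟩, fun p q hpq => ?_⟩
  fin_cases p <;> fin_cases q <;> simp_all [fanGraph, SimpleGraph.adj_comm]

lemma containsCopy_fanGraph_three_of_isClique {V : Type*} {B : SimpleGraph V} {H : Finset V}
    (hH : 5 ≤ #H) (hK : B.IsClique (H : Set V)) {u x y : V} (hu : u ∈ H) (hx : x ∉ H)
    (hy : y ∉ H) (hux : B.Adj u x) (huy : B.Adj u y) (hxy : B.Adj x y) :
    ContainsCopy B (fanGraph 3) := by
  classical
  obtain ⟨s, hsH, hs⟩ := exists_subset_card_eq (show 4 ≤ #(H.erase u) by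
    rw [card_erase_of_mem hu]; omega)
  obtain ⟨a, b, c, d, hab, hac, had, hbc, hbd, hcd, rfl⟩ := card_eq_four.mp hs
  have hmem : ∀ v ∈ ({a, b, c, d} : Finset V), v ∈ H ∧ u ≠ v := fun v hv =>
    ⟨mem_of_mem_erase (hsH hv), (ne_of_mem_erase (hsH hv)).symm⟩
  simp only [mem_insert, mem_singleton, forall_eq_or_imp, forall_eq] at hmem
  obtain ⟨⟨haH, hua⟩, ⟨hbH, hub⟩, ⟨hcH, huc⟩, ⟨hdH, hud⟩⟩ := hmem
  have hout : ∀ {v w}, v ∉ H → w ∈ H → v ≠ w := fun hv hw => (ne_of_mem_of_not_mem hw hv).symm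
  exact containsCopy_fanGraph_three hux huy (hK hu haH hua) (hK hu hbH hub) (hK hu hcH huc)
    (hK hu hdH hud) hxy (hK haH hbH hab) (hK hcH hdH hcd) (hout hx haH) (hout hx hbH)
    (hout hx hcH) (hout hx hdH) (hout hy haH) (hout hy hbH) (hout hy hcH) (hout hy hdH)
    hac had hbc hbd

theorem blue_nbrs_outside_form_red_clique_general {V : Type*}
    (R : SimpleGraph V) (hblue : ¬ ContainsCopy Rᶜ (fanGraph 3))
    (H : Finset V) (hH : H.card = 5)
    (hK5 : ∀ a ∈ H, ∀ b ∈ H, a ≠ b → Rᶜ.Adj a b)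
    (u : V) (hu : u ∈ H) :
    ∀ x ∈ {w : V | w ∉ H ∧ Rᶜ.Adj u w}, ∀ y ∈ {w : V | w ∉ H ∧ Rᶜ.Adj u w},
      x ≠ y → R.Adj x y := by
  rintro x ⟨hxH, hux⟩ y ⟨hyH, huy⟩ hxy
  by_contra hred
  exact hblue <| containsCopy_fanGraph_three_of_isClique hH.ge hK5 hu hxH hyH hux huy ⟨hxy, hred⟩

/-- In a red-blue coloring of a complete graph with no blue `F₃`, if `H` is a set
of 5 vertices inducing a blue `K₅` and `u ∈ H` has at least 2 blue neighbors
outside `H`, then the blue neighbors of `u` outside `H` form a red clique. -/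
theorem blue_nbrs_outside_form_red_clique {V : Type*} [Fintype V]
    (R : SimpleGraph V) (hblue : ¬ ContainsCopy Rᶜ (fanGraph 3))
    (H : Finset V) (hH : H.card = 5)
    (hK5 : ∀ a ∈ H, ∀ b ∈ H, a ≠ b → Rᶜ.Adj a b)
    (u : V) (hu : u ∈ H)
    (hnb : 2 ≤ {w : V | w ∉ H ∧ Rᶜ.Adj u w}.ncard) :
    ∀ x ∈ {w : V | w ∉ H ∧ Rᶜ.Adj u w}, ∀ y ∈ {w : V | w ∉ H ∧ Rᶜ.Adj u w},
      x ≠ y → R.Adj x y :=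
  blue_nbrs_outside_form_red_clique_general R hblue H hH hK5 u hu
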